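/- There is a constant C > 0 such that for all q, p ∈ ℝ with 0 < q√3 < p (hence 0 < q < p/√3), one has |f(q,p) + 1| ≤ C·(q² + 1/p²). -/

import Mathlib

open MeasureTheory Real

noncomputable section

/-- The sine integral `Si(x) = ∫₀ˣ (sin u)/u du`. -/
def Si (x : ℝ) : ℝ := ∫ u in (0:ℝ)..x, Real.sin u / u

/-- The function `f(q,p)`, the Weyl transform of `(A² − 3)/2`. -/
def ftrans (q p : ℝ) : ℝ :=
  (2 / π) * (Si ((4 / Real.sqrt 3) * q * ((-q + p * Real.sqrt 3) / 2))
    + Si ((4 / Real.sqrt 3) * q * ((-q - p * Real.sqrt 3) / 2))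
    + Si ((4 / Real.sqrt 3) * ((-q + p * Real.sqrt 3) / 2) * ((-q - p * Real.sqrt 3) / 2)))

open Set Filter

lemma sinc_abs_le (u : ℝ) : |Real.sin u / u| ≤ 1 := by
  rcases eq_or_ne u 0 with h | h
  · simp [h]
  · rw [abs_div, div_le_one (abs_pos.mpr h)]
    exact Real.abs_sin_le_abs

lemma intervalIntegrable_sinc (a b : ℝ) :
    IntervalIntegrable (fun u => Real.sin u / u) volume a b := by
  apply IntervalIntegrable.mono_fun (intervalIntegrable_const (c := (1:ℝ)))
  · exact (Real.measurable_sin.div measurable_id).aestronglyMeasurable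
  · filter_upwards with u
    rw [Real.norm_eq_abs, norm_one]
    exact sinc_abs_le u

lemma Si_sub_Si (a b : ℝ) : Si b - Si a = ∫ u in a..b, Real.sin u / u := by
  have := intervalIntegral.integral_add_adjacent_intervals
    (intervalIntegrable_sinc 0 a) (intervalIntegrable_sinc a b)
  simp only [Si]
  linarith [this]

lemma Si_diff_le {a b : ℝ} (h : a ≤ b) : |Si b - Si a| ≤ b - a := by
  rw [Si_sub_Si]
  have := intervalIntegral.norm_integral_le_of_norm_le_const
    (C := 1) (f := fun u => Real.sin u / u) (a := a) (b := b) ?_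
  · simpa [Real.norm_eq_abs, abs_of_nonneg (sub_nonneg.mpr h)] using this
  · intro x _
    rw [Real.norm_eq_abs]
    exact sinc_abs_le x

lemma Si_neg (x : ℝ) : Si (-x) = - Si x := by
  have h : (∫ u in (0:ℝ)..x, Real.sin (-u) / (-u)) = ∫ u in (-x)..(-(0:ℝ)), Real.sin u / u :=
    intervalIntegral.integral_comp_neg (a := 0) (b := x) (fun u => Real.sin u / u)
  simp only [Real.sin_neg, neg_div_neg_eq, neg_zero] at h
  rw [Si, Si, h, intervalIntegral.integral_symm]

/-- Antiderivative computation: `∫_0^T e^{-xt} sin x dx`. -/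
lemma inner_integral (t T : ℝ) :
    (∫ x in (0:ℝ)..T, Real.exp (-(x * t)) * Real.sin x)
      = (1 - Real.exp (-(T * t)) * (t * Real.sin T + Real.cos T)) / (1 + t ^ 2) := by
  have h1t : (1 : ℝ) + t ^ 2 ≠ 0 := by positivity
  have key : ∀ x : ℝ, HasDerivAt
      (fun x => -(Real.exp (-(x * t)) * (t * Real.sin x + Real.cos x)) / (1 + t ^ 2))
      (Real.exp (-(x * t)) * Real.sin x) x := by
    intro x
    have he : HasDerivAt (fun x : ℝ => Real.exp (-(x * t))) (-t * Real.exp (-(x * t))) x := by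
      have h0 : HasDerivAt (fun x : ℝ => -(x * t)) (-t) x := by
        exact (hasDerivAt_mul_const t).neg
      simpa [mul_comm] using h0.exp
    have hs : HasDerivAt (fun x : ℝ => t * Real.sin x + Real.cos x)
        (t * Real.cos x + -Real.sin x) x :=
      ((Real.hasDerivAt_sin x).const_mul t).add (Real.hasDerivAt_cos x)
    have := ((he.mul hs).neg.div_const (1 + t ^ 2))
    refine this.congr_deriv ?_
    field_simp
    ring
  rw [intervalIntegral.integral_eq_sub_of_hasDerivAt (fun x _ => key x) ?_]
  · simp [Real.cos_zero, Real.sin_zero]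
    ring
  · exact (Continuous.intervalIntegrable (by continuity) _ _)

lemma exp_Ioi_integral {x : ℝ} (hx : 0 < x) :
    (∫ t in Ioi (0:ℝ), Real.exp (-(x * t))) = 1 / x := by
  have := integral_comp_mul_left_Ioi (fun u => Real.exp (-u)) 0 hx
  simp only [mul_zero] at this
  rw [show (fun t => Real.exp (-(x * t))) = fun t => Real.exp (-(x * t)) from rfl]
  calc (∫ t in Ioi (0:ℝ), Real.exp (-(x * t))) = x⁻¹ • ∫ u in Ioi (0:ℝ), Real.exp (-u) := this
    _ = 1 / x := by rw [integral_exp_neg_Ioi_zero]; simp [one_div]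

lemma J_integrand_bound (T t : ℝ) (ht : 0 ≤ t) :
    ‖Real.exp (-(T * t)) * (t * Real.sin T + Real.cos T) / (1 + t ^ 2)‖
      ≤ 2 * Real.exp (-(T * t)) := by
  have h1 : (0:ℝ) < 1 + t ^ 2 := by positivity
  rw [Real.norm_eq_abs, abs_div, abs_of_pos h1, abs_mul,
    abs_of_pos (Real.exp_pos _), div_le_iff₀ h1]
  have h2 : |t * Real.sin T + Real.cos T| ≤ 2 * (1 + t ^ 2) := by
    have := abs_add_le (t * Real.sin T) (Real.cos T)
    have hs := Real.abs_sin_le_one T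
    have hc := Real.abs_cos_le_one T
    have ht' : |t| = t := abs_of_nonneg ht
    rw [abs_mul, ht'] at this
    nlinarith [mul_le_mul_of_nonneg_left hs ht]
  calc Real.exp (-(T * t)) * |t * Real.sin T + Real.cos T|
      ≤ Real.exp (-(T * t)) * (2 * (1 + t ^ 2)) := by
        exact mul_le_mul_of_nonneg_left h2 (Real.exp_pos _).le
    _ = 2 * Real.exp (-(T * t)) * (1 + t ^ 2) := by ring

lemma J_integrable {T : ℝ} (hT : 0 < T) :
    Integrable (fun t => Real.exp (-(T * t)) * (t * Real.sin T + Real.cos T) / (1 + t ^ 2))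
      (volume.restrict (Ioi (0:ℝ))) := by
  have hexp : IntegrableOn (fun t => 2 * Real.exp (-(T * t))) (Ioi (0:ℝ)) := by
    have := (exp_neg_integrableOn_Ioi 0 hT).const_mul 2
    exact (by simpa [neg_mul] using this : Integrable _ _)
  apply Integrable.mono' hexp
  · have c1 : Continuous fun t : ℝ => Real.exp (-(T * t)) * (t * Real.sin T + Real.cos T) := by
      continuity
    have c2 : Continuous fun t : ℝ => (1 : ℝ) + t ^ 2 := by continuity
    exact (c1.div c2 fun t => by positivity).aestronglyMeasurable
  · filter_upwards [ae_restrict_mem measurableSet_Ioi] with t ht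
    exact J_integrand_bound T t (le_of_lt ht)

lemma J_bound {T : ℝ} (hT : 0 < T) :
    ‖∫ t in Ioi (0:ℝ), Real.exp (-(T * t)) * (t * Real.sin T + Real.cos T) / (1 + t ^ 2)‖
      ≤ 2 / T := by
  have hexp : IntegrableOn (fun t => 2 * Real.exp (-(T * t))) (Ioi (0:ℝ)) := by
    have := (exp_neg_integrableOn_Ioi 0 hT).const_mul 2
    exact (by simpa [neg_mul] using this : Integrable _ _)
  refine (norm_integral_le_of_norm_le hexp ?_).trans ?_
  · filter_upwards [ae_restrict_mem measurableSet_Ioi] with t ht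
    exact J_integrand_bound T t (le_of_lt ht)
  · rw [integral_const_mul, exp_Ioi_integral hT, mul_one_div]

set_option maxHeartbeats 1000000 in
lemma Si_eq {T : ℝ} (hT : 0 < T) :
    Si T = π / 2
      - ∫ t in Ioi (0:ℝ), Real.exp (-(T * t)) * (t * Real.sin T + Real.cos T) / (1 + t ^ 2) := by
  have hFc : Continuous (fun p : ℝ × ℝ => Real.exp (-(p.1 * p.2)) * Real.sin p.1) := by
    apply Continuous.mul
    · exact Real.continuous_exp.comp (continuous_fst.mul continuous_snd).neg
    · exact Real.continuous_sin.comp continuous_fst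
  have hμ : volume (Ioc (0:ℝ) T) < ⊤ := measure_Ioc_lt_top
  have huncurry : Function.uncurry (fun x t => Real.exp (-(x * t)) * Real.sin x)
      = fun p : ℝ × ℝ => Real.exp (-(p.1 * p.2)) * Real.sin p.1 := rfl
  -- integrability on the product
  have hint : Integrable (Function.uncurry fun x t => Real.exp (-(x * t)) * Real.sin x)
      ((volume.restrict (Ioc (0:ℝ) T)).prod (volume.restrict (Ioi (0:ℝ)))) := by
    rw [huncurry, integrable_prod_iff (hFc.aestronglyMeasurable)]
    constructor
    · filter_upwards [ae_restrict_mem measurableSet_Ioc] with x hx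
      have hx0 : 0 < x := hx.1
      have := (exp_neg_integrableOn_Ioi 0 hx0).mul_const (Real.sin x)
      simpa [neg_mul] using this
    · -- the function x ↦ ∫ t, ‖F (x,t)‖ is integrable on Ioc 0 T
      have hg : IntegrableOn (fun x => |Real.sin x| / x) (Ioc (0:ℝ) T) := by
        have hconst : IntegrableOn (fun _ : ℝ => (1:ℝ)) (Ioc (0:ℝ) T) :=
          integrableOn_const hμ.ne
        apply Integrable.mono' hconst
        · exact ((Real.measurable_sin.abs.div measurable_id).aestronglyMeasurable).restrict
        · filter_upwards with x
          rw [Real.norm_eq_abs, abs_div, abs_abs, ← abs_div]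
          exact sinc_abs_le x
      apply hg.congr
      filter_upwards [ae_restrict_mem measurableSet_Ioc] with x hx
      have hx0 : 0 < x := hx.1
      have h1 : (fun t => ‖Real.exp (-(x * t)) * Real.sin x‖)
          = fun t => Real.exp (-(x * t)) * |Real.sin x| := by
        funext t
        rw [Real.norm_eq_abs, abs_mul, abs_of_pos (Real.exp_pos _)]
      rw [h1, integral_mul_const, exp_Ioi_integral hx0, one_div, inv_mul_eq_div, eq_comm]
  -- Step 1: Si T as iterated integral
  have step1 : Si T = ∫ x in Ioc (0:ℝ) T, ∫ t in Ioi (0:ℝ), Real.exp (-(x * t)) * Real.sin x := by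
    rw [Si, intervalIntegral.integral_of_le hT.le]
    apply setIntegral_congr_fun measurableSet_Ioc
    intro x hx
    have hx0 : 0 < x := hx.1
    dsimp only
    rw [integral_mul_const, exp_Ioi_integral hx0, one_div, inv_mul_eq_div]
  -- Step 2: swap
  have step2 : (∫ x in Ioc (0:ℝ) T, ∫ t in Ioi (0:ℝ), Real.exp (-(x * t)) * Real.sin x)
      = ∫ t in Ioi (0:ℝ), ∫ x in Ioc (0:ℝ) T, Real.exp (-(x * t)) * Real.sin x :=
    integral_integral_swap hint
  -- Step 3: inner integral value
  have step3 : (∫ t in Ioi (0:ℝ), ∫ x in Ioc (0:ℝ) T, Real.exp (-(x * t)) * Real.sin x)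
      = ∫ t in Ioi (0:ℝ),
          (1 - Real.exp (-(T * t)) * (t * Real.sin T + Real.cos T)) / (1 + t ^ 2) := by
    apply setIntegral_congr_fun measurableSet_Ioi
    intro t _
    dsimp only
    rw [← intervalIntegral.integral_of_le hT.le]
    exact inner_integral t T
  -- Step 4: split the integral
  have hinv : IntegrableOn (fun t : ℝ => (1 + t ^ 2)⁻¹) (Ioi (0:ℝ)) :=
    integrable_inv_one_add_sq.integrableOn
  have hJ := J_integrable hT
  have step4 : (∫ t in Ioi (0:ℝ),
        (1 - Real.exp (-(T * t)) * (t * Real.sin T + Real.cos T)) / (1 + t ^ 2))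
      = (∫ t in Ioi (0:ℝ), (1 + t ^ 2)⁻¹)
        - ∫ t in Ioi (0:ℝ), Real.exp (-(T * t)) * (t * Real.sin T + Real.cos T) / (1 + t ^ 2) := by
    rw [← integral_sub hinv hJ]
    apply setIntegral_congr_fun measurableSet_Ioi
    intro t _
    dsimp only
    have h1t : (1 : ℝ) + t ^ 2 ≠ 0 := by positivity
    field_simp
  rw [step1, step2, step3, step4, integral_Ioi_inv_one_add_sq]
  simp [Real.arctan_zero]

lemma Si_tail {T : ℝ} (hT : 0 < T) : |Si T - π / 2| ≤ 2 / T := by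
  rw [Si_eq hT]
  rw [show π / 2
      - (∫ t in Ioi (0:ℝ), Real.exp (-(T * t)) * (t * Real.sin T + Real.cos T) / (1 + t ^ 2))
      - π / 2
      = -(∫ t in Ioi (0:ℝ), Real.exp (-(T * t)) * (t * Real.sin T + Real.cos T) / (1 + t ^ 2))
    by ring, abs_neg]
  exact J_bound hT

/-- There is a constant `C > 0` such that for all `q, p` with
`0 < q√3 < p`, `|f(q,p) + 1| ≤ C·(q² + 1/p²)`. -/
theorem ftrans_add_one_le_sq_add :
    ∃ C : ℝ, 0 < C ∧ ∀ q p : ℝ,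
      0 < q * Real.sqrt 3 → q * Real.sqrt 3 < p →
        |ftrans q p + 1| ≤ C * (q ^ 2 + 1 / p ^ 2) := by
  refine ⟨4, by norm_num, ?_⟩
  intro q p hqs hp
  simp only [ftrans]
  set s := Real.sqrt 3 with hsdef
  have hs0 : 0 < s := Real.sqrt_pos.mpr (by norm_num)
  have hs2 : s ^ 2 = 3 := Real.sq_sqrt (by norm_num)
  have hq : 0 < q := by nlinarith
  have hp0 : 0 < p := lt_trans hqs hp
  have hq2 : 3 * q ^ 2 < p ^ 2 := by nlinarith
  set a := (4 / s) * q * ((p * s - q) / 2) with ha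
  set b := (4 / s) * q * ((p * s + q) / 2) with hb
  set c := (3 * p ^ 2 - q ^ 2) / s with hc
  have hps2 : p ^ 2 * s ^ 2 = 3 * p ^ 2 := by rw [hs2]; ring
  rw [show (4 / s) * q * ((-q + p * s) / 2) = a from by rw [ha]; ring]
  rw [show (4 / s) * q * ((-q - p * s) / 2) = -b from by rw [hb]; ring]
  rw [show (4 / s) * ((-q + p * s) / 2) * ((-q - p * s) / 2) = -c from by
    rw [hc, show (4 / s) * ((-q + p * s) / 2) * ((-q - p * s) / 2)
        = (q ^ 2 - p ^ 2 * s ^ 2) / s from by ring, hps2]; ring]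
  rw [Si_neg, Si_neg]
  have hπ : (0:ℝ) < π := Real.pi_pos
  have key : 2 / π * (Si a + -Si b + -Si c) + 1
      = 2 / π * ((Si a - Si b) - (Si c - π / 2)) := by
    field_simp
    ring
  rw [key, abs_mul, abs_of_pos (by positivity : (0:ℝ) < 2 / π)]
  have hab : a ≤ b := by
    have : b - a = 4 * q ^ 2 / s := by rw [ha, hb]; ring
    nlinarith [div_nonneg (by positivity : (0:ℝ) ≤ 4 * q ^ 2) hs0.le]
  have h1 : |Si a - Si b| ≤ 4 * q ^ 2 := by
    rw [abs_sub_comm]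
    refine (Si_diff_le hab).trans ?_
    have hba : b - a = 4 * q ^ 2 / s := by rw [ha, hb]; ring
    rw [hba, div_le_iff₀ hs0]
    nlinarith
  have hcp : p ^ 2 ≤ c := by
    rw [hc, le_div_iff₀ hs0]
    nlinarith [sq_nonneg (s - 2)]
  have hc0 : 0 < c := lt_of_lt_of_le (by positivity) hcp
  have h2 : |Si c - π / 2| ≤ 2 / p ^ 2 := by
    refine (Si_tail hc0).trans ?_
    gcongr
  have h2π : 2 / π ≤ 1 := by
    rw [div_le_one hπ]
    linarith [Real.two_le_pi]
  calc 2 / π * |Si a - Si b - (Si c - π / 2)|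
      ≤ 1 * (|Si a - Si b| + |Si c - π / 2|) := by
        apply mul_le_mul h2π (abs_sub _ _) (abs_nonneg _) zero_le_one
    _ ≤ 4 * q ^ 2 + 2 / p ^ 2 := by rw [one_mul]; exact add_le_add h1 h2
    _ ≤ 4 * (q ^ 2 + 1 / p ^ 2) := by
        have : 2 / p ^ 2 ≤ 4 * (1 / p ^ 2) := by
          rw [mul_one_div]
          gcongr
          norm_num
        linarith
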